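/- There exists a set of 11 points in the projective Hjelmslev 3-space over S = 𝔽₂[X]/(X²) such that every hyperplane contains at most 4 of them; explicitly, the points spanned by (1,0,0,0), (0,1,0,0), (0,0,1,0), (0,0,0,1), (1,1,1,1), (X,1,X+1,X), (1,X,X+1,X+1), (1,X,1,X), (1,X+1,0,X), (1,X+1,X+1,0), (0,1,X,X+1) form such a set. -/

import Mathlib

/-- A point of a projective Hjelmslev geometry PHG(n-1, R): a free rank-1 submodule
of Rⁿ, i.e. the R-span of a vector having at least one unit coordinate. -/
def IsPoint {R : Type} [CommRing R] {n : ℕ} (P : Submodule R (Fin n → R)) : Prop :=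
  ∃ v : Fin n → R, (∃ i, IsUnit (v i)) ∧ P = Submodule.span R {v}

/-- A free rank-k submodule of Rⁿ: a submodule linearly isomorphic to Rᵏ. -/
def IsFreeRank {R : Type} [CommRing R] {n : ℕ} (k : ℕ) (L : Submodule R (Fin n → R)) : Prop :=
  Nonempty ((Fin k → R) ≃ₗ[R] L)

/-- A line of PHG(2, R): a free rank-2 submodule of R³. -/
abbrev IsLine {R : Type} [CommRing R] (L : Submodule R (Fin 3 → R)) : Prop := IsFreeRank 2 L

/-- A hyperplane of PHG(3, R): a free rank-3 submodule of R⁴. -/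
abbrev IsHyperplane {R : Type} [CommRing R] (H : Submodule R (Fin 4 → R)) : Prop := IsFreeRank 3 H

/-- The chain ring S = 𝔽₂[X]/(X²), the dual numbers over the field with 2 elements. -/
abbrev S2 := DualNumber (ZMod 2)

open DualNumber in
/-- The eleven listed points of PHG(3, 𝔽₂[X]/(X²)); here `eps` plays the role of X. -/
noncomputable def A11 : Set (Submodule S2 (Fin 4 → S2)) :=
  (fun v => Submodule.span S2 {v}) ''
    {![1,0,0,0], ![0,1,0,0], ![0,0,1,0], ![0,0,0,1], ![1,1,1,1],
     ![eps,1,eps+1,eps], ![1,eps,eps+1,eps+1], ![1,eps,1,eps],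
     ![1,eps+1,0,eps], ![1,eps+1,eps+1,0], ![0,1,eps,eps+1]}

/-!
A hyperplane `H`, being free of rank 3 with basis `u₀, u₁, u₂`, lies in the kernel of
`x ↦ a ⬝ᵥ x`, where `a` is the cofactor vector with `a ⬝ᵥ x = det (u₀; u₁; u₂; x)`. This `a` has a
unit coordinate: reducing mod `ε`, the `uᵢ` stay linearly independent over `𝔽₂`, so they extend
by some `w` to a basis of `𝔽₂⁴`, and then `a ⬝ᵥ w` reduces to a nonzero determinant. So every
listed point on `H` is spanned by some listed `v` with `a ⬝ᵥ v = 0`, and a finite check over all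
`a` with a unit coordinate shows there are at most 4 such `v`.
-/

open Matrix DualNumber TrivSqZeroExt

section Cofactor
variable {R : Type*} [CommRing R] {n : ℕ}

def cofactorVec (u : Fin n → Fin (n + 1) → R) : Fin (n + 1) → R :=
  fun j => (-1) ^ (n + j : ℕ) * det (of fun i k => u i (j.succAbove k))

theorem cofactorVec_dotProduct (u : Fin n → Fin (n + 1) → R) (x : Fin (n + 1) → R) :
    cofactorVec u ⬝ᵥ x = det (of (Fin.snoc u x)) := by
  rw [det_succ_row _ (Fin.last n), dotProduct]
  refine Finset.sum_congr rfl fun j _ => ?_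
  simp [cofactorVec, submatrix, Fin.succAbove_last]
  ring

theorem cofactorVec_dotProduct_self (u : Fin n → Fin (n + 1) → R) (k : Fin n) :
    cofactorVec u ⬝ᵥ u k = 0 := by
  rw [cofactorVec_dotProduct]
  refine det_zero_of_row_eq (Fin.castSucc_lt_last k).ne (funext fun j => ?_)
  simp

end Cofactor

namespace DualNumber

theorem fst_det_of_snoc {R : Type*} [CommRing R] {n : ℕ} (u : Fin n → Fin (n + 1) → R[ε])
    (x : Fin (n + 1) → R[ε]) :
    (det (of (Fin.snoc u x))).fst =
      det (of (Fin.snoc (fun k t => (u k t).fst) fun t => (x t).fst)) := by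
  rw [← fstHom_apply R R, AlgHom.map_det]
  congr 1
  ext i j
  refine Fin.lastCases ?_ (fun i => ?_) i <;> simp

variable {K : Type*} [Field K]

/-- A relation `∑ gₖ • ūₖ = 0` over `K` lifts to the relation `∑ (ε gₖ) • uₖ = 0` over `K[ε]`,
since `ε` kills the part of `uₖ` that reduction forgets. -/
theorem linearIndependent_fst {ι m : Type*} [Fintype ι] {u : ι → m → K[ε]}
    (hu : LinearIndependent K[ε] u) : LinearIndependent K fun k t => (u k t).fst := by
  rw [Fintype.linearIndependent_iff] at hu ⊢
  intro g hg k
  have hlift : ∑ k, (inr (g k) : K[ε]) • u k = 0 := by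
    funext t
    have hgt := congrFun hg t
    simp only [Finset.sum_apply, Pi.smul_apply, smul_eq_mul, Pi.zero_apply] at hgt ⊢
    ext <;> simp [fst_sum, snd_sum, hgt]
  exact inr_injective (hu (fun k => inr (g k)) hlift k)

theorem exists_isUnit_dotProduct_eq_zero_of_linearIndependent {n : ℕ}
    {u : Fin n → Fin (n + 1) → K[ε]} (hu : LinearIndependent K[ε] u) :
    ∃ a, (∃ j, IsUnit (a j)) ∧ ∀ k, a ⬝ᵥ u k = 0 := by
  have hr : LinearIndependent K fun k t => (u k t).fst := linearIndependent_fst hu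
  obtain ⟨w, hw⟩ := exists_linearIndependent_snoc_of_lt_finrank hr (by simp)
  refine ⟨cofactorVec u, ?_, cofactorVec_dotProduct_self u⟩
  have hdet : (cofactorVec u ⬝ᵥ fun t => inl (w t)).fst ≠ 0 := by
    rw [cofactorVec_dotProduct, fst_det_of_snoc, ← isUnit_iff_ne_zero, ← isUnit_iff_isUnit_det]
    exact linearIndependent_rows_iff_isUnit.mp hw
  have hsum : ∑ j, (cofactorVec u j).fst * w j ≠ 0 := by
    simpa only [dotProduct, fst_sum, fst_mul, fst_inl] using hdet
  obtain ⟨j, -, hj⟩ := Finset.exists_ne_zero_of_sum_ne_zero hsum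
  exact ⟨j, isUnit_iff_isUnit_fst.mpr (isUnit_iff_ne_zero.mpr (left_ne_zero_of_mul hj))⟩

end DualNumber

theorem IsFreeRank.exists_isUnit_dotProduct_eq_zero {K : Type} [Field K] {n : ℕ}
    {H : Submodule K[ε] (Fin (n + 1) → K[ε])} (hH : IsFreeRank n H) :
    ∃ a, (∃ j, IsUnit (a j)) ∧ ∀ x ∈ H, a ⬝ᵥ x = 0 := by
  obtain ⟨e⟩ := hH
  let b := (Pi.basisFun K[ε] (Fin n)).map e
  obtain ⟨a, ha, hab⟩ := DualNumber.exists_isUnit_dotProduct_eq_zero_of_linearIndependent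
    (b.linearIndependent.map' H.subtype H.ker_subtype)
  have hker : dotProductBilin K[ε] K[ε] a ∘ₗ H.subtype = 0 := b.ext hab
  exact ⟨a, ha, fun x hx => LinearMap.congr_fun hker ⟨x, hx⟩⟩

theorem ncard_span_singleton_le_le_card_filter {R : Type*} [CommRing R] {ι m : Type*}
    [Fintype ι] [Fintype m] [DecidableEq R] (v : ι → m → R) {H : Submodule R (m → R)} {a : m → R}
    (ha : ∀ x ∈ H, a ⬝ᵥ x = 0) :
    {P ∈ Set.range fun k => Submodule.span R {v k} | P ≤ H}.ncard ≤
      (Finset.univ.filter fun k => a ⬝ᵥ v k = 0).card := by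
  rw [← Set.ncard_coe_finset]
  refine (Set.ncard_le_ncard ?_ (Set.toFinite _)).trans
    (Set.ncard_image_le (f := fun k => Submodule.span R {v k}) (Set.toFinite _))
  rintro _ ⟨⟨k, rfl⟩, hk⟩
  exact ⟨k, by simpa using ha _ (hk (Submodule.mem_span_singleton_self _)), rfl⟩

instance {R M : Type*} [DecidableEq R] [DecidableEq M] : DecidableEq (TrivSqZeroExt R M) :=
  inferInstanceAs (DecidableEq (R × M))

instance {R M : Type*} [Fintype R] [Fintype M] : Fintype (TrivSqZeroExt R M) :=
  inferInstanceAs (Fintype (R × M))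

def arcVec : Fin 11 → Fin 4 → S2 :=
  ![![1,0,0,0], ![0,1,0,0], ![0,0,1,0], ![0,0,0,1], ![1,1,1,1],
    ![ε,1,ε+1,ε], ![1,ε,ε+1,ε+1], ![1,ε,1,ε],
    ![1,ε+1,0,ε], ![1,ε+1,ε+1,0], ![0,1,ε,ε+1]]

theorem A11_eq_range : A11 = Set.range fun k => Submodule.span S2 {arcVec k} := by
  refine Eq.trans ?_ (Set.range_comp (fun v => Submodule.span S2 {v}) arcVec).symm
  rw [A11]
  congr 1
  simp only [arcVec, Matrix.range_cons, Matrix.range_empty, Set.union_empty, Set.singleton_union]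

theorem arcVec_exists_eq_one : ∀ k, ∃ i, arcVec k i = 1 := by decide

theorem arcVec_eq_of_smul_eq : ∀ k l, (∃ c : S2, c • arcVec l = arcVec k) → k = l := by decide

set_option maxRecDepth 20000 in
theorem card_filter_dotProduct_arcVec_le (a : Fin 4 → S2) (ha : ∃ j, IsUnit (a j)) :
    (Finset.univ.filter fun k => a ⬝ᵥ arcVec k = 0).card ≤ 4 := by
  have hcheck : ∀ a : Fin 4 → S2, (∃ j, (a j).fst ≠ 0) →
      (Finset.univ.filter fun k => a ⬝ᵥ arcVec k = 0).card ≤ 4 := by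
    decide
  simp only [isUnit_iff_isUnit_fst, isUnit_iff_ne_zero] at ha
  exact hcheck a ha

theorem span_arcVec_injective : Function.Injective fun k => Submodule.span S2 {arcVec k} := by
  intro k l h
  exact arcVec_eq_of_smul_eq k l
    (Submodule.mem_span_singleton.mp (h.le (Submodule.mem_span_singleton_self (arcVec k))))

theorem eleven_four_arc_S2 :
    (∀ P ∈ A11, IsPoint P) ∧ A11.ncard = 11 ∧
    ∀ H : Submodule S2 (Fin 4 → S2), IsHyperplane H → {P ∈ A11 | P ≤ H}.ncard ≤ 4 := by
  rw [A11_eq_range]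
  refine ⟨?_, ?_, fun H hH => ?_⟩
  · rintro _ ⟨k, rfl⟩
    obtain ⟨i, hi⟩ := arcVec_exists_eq_one k
    exact ⟨arcVec k, ⟨i, hi ▸ isUnit_one⟩, rfl⟩
  · rw [Set.ncard_range_of_injective span_arcVec_injective, Nat.card_fin]
  · obtain ⟨a, ha_unit, ha⟩ := hH.exists_isUnit_dotProduct_eq_zero
    exact (ncard_span_singleton_le_le_card_filter arcVec ha).trans
      (card_filter_dotProduct_arcVec_le a ha_unit)
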